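/- arXiv:2605.23550 — 4 statements merged into one kernel-verified Lean document; each statement's English description precedes it below -/
import Mathlib

section
/- Descent lemma for proximal DCA steps with numerical active sets: Suppose g : R^n -> R is convex differentiable, each psi_i is convex differentiable, h = max_{i in I} psi_i, and F = g - h. Fix x^k, epsilon_k >= 0, the epsilon-active set A_k = {i : h(x^k) - psi_i(x^k) <= epsilon_k}, a vector v^k in the convex hull of {grad psi_i(x^k) : i in A_k}, and sigma >= 0 such that q_k(x) := g(x) - <v^k, x - x^k> + (sigma/2)||x - x^k||^2 is mu-strongly convex for some mu > 0. If x^{k+1} minimizes q_k, then F(x^{k+1}) <= F(x^k) + epsilon_k - (mu/2)||x^{k+1} - x^k||^2. -/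
/-!
Strong convexity of `q_k` at its minimizer gives `q_k(x^{k+1}) + (μ/2)‖x^{k+1} - x^k‖² ≤ q_k(x^k)
= g(x^k)`. The vector `v^k` is an `ε_k`-subgradient of `h` at `x^k`: each `ε_k`-active gradient
satisfies `⟪∇ψ_i(x^k), y - x^k⟫ ≤ ψ_i(y) - ψ_i(x^k) ≤ h(y) - h(x^k) + ε_k`, and this linear bound
passes to the convex hull. Dropping the nonnegative proximal term and combining the two
inequalities gives the descent estimate.
-/

open scoped RealInnerProductSpace
open Set Filter Topology

lemma ConvexOn.add_inner_le_of_hasGradientAt {E : Type*} [NormedAddCommGroup E]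
    [InnerProductSpace ℝ E] [CompleteSpace E] {f : E → ℝ} {s : Set E} {x y v : E}
    (hf : ConvexOn ℝ s f) (hx : x ∈ s) (hy : y ∈ s) (hv : HasGradientAt f v x) :
    f x + ⟪v, y - x⟫ ≤ f y := by
  let φ : ℝ → ℝ := f ∘ AffineMap.lineMap x y
  have hφ : ConvexOn ℝ (AffineMap.lineMap x y ⁻¹' s) φ := hf.comp_affineMap _
  have hφ' : HasDerivAt φ ⟪v, y - x⟫ 0 := by
    have hv' : HasFDerivAt f (InnerProductSpace.toDual ℝ E v) (AffineMap.lineMap x y (0 : ℝ)) := by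
      simpa using hv.hasFDerivAt
    simpa [InnerProductSpace.toDual_apply_apply] using
      hv'.comp_hasDerivAt (0 : ℝ) AffineMap.hasDerivAt_lineMap
  have := hφ.le_slope_of_hasDerivAt (x := 0) (y := 1) (by simpa using hx) (by simpa using hy)
    zero_lt_one hφ'
  simp only [slope_def_field, Function.comp_apply, AffineMap.lineMap_apply_one,
    AffineMap.lineMap_apply_zero, sub_zero, div_one, φ] at this
  linarith

lemma StrongConvexOn.add_sq_norm_le_of_isMinOn {E : Type*} [NormedAddCommGroup E]
    [NormedSpace ℝ E] {f : E → ℝ} {s : Set E} {m : ℝ} {x y : E}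
    (hf : StrongConvexOn s m f) (hmin : IsMinOn f s x) (hx : x ∈ s) (hy : y ∈ s) :
    f x + m / 2 * ‖y - x‖ ^ 2 ≤ f y := by
  -- minimality at the point `t • y + (1 - t) • x` of the segment, divided by `t`
  have key : ∀ t ∈ Ioc (0 : ℝ) 1, f x + (1 - t) * (m / 2 * ‖y - x‖ ^ 2) ≤ f y := by
    rintro t ⟨ht0, ht1⟩
    have hseg := hf.2 hy hx ht0.le (sub_nonneg.2 ht1) (add_sub_cancel t 1)
    have hmin' : f x ≤ f (t • y + (1 - t) • x) :=
      hmin (hf.1 hy hx ht0.le (sub_nonneg.2 ht1) (add_sub_cancel t 1))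
    simp only [smul_eq_mul] at hseg
    nlinarith
  have hlim : Tendsto (fun t : ℝ ↦ f x + (1 - t) * (m / 2 * ‖y - x‖ ^ 2)) (𝓝[>] 0)
      (𝓝 (f x + m / 2 * ‖y - x‖ ^ 2)) :=
    tendsto_nhdsWithin_of_tendsto_nhds <| by
      simpa using (show Continuous fun t : ℝ ↦ f x + (1 - t) * (m / 2 * ‖y - x‖ ^ 2) by
        fun_prop).tendsto 0
  exact le_of_tendsto hlim <| mem_of_superset (Ioc_mem_nhdsGT zero_lt_one) key

lemma inner_sub_le_of_mem_convexHull_nearActive {E ι : Type*} [NormedAddCommGroup E]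
    [InnerProductSpace ℝ E] [CompleteSpace E] {ψ : ι → E → ℝ} {h : E → ℝ} {grad : ι → E}
    {A : Set ι} {x y v : E} {ε : ℝ} (hψ : ∀ i ∈ A, ConvexOn ℝ univ (ψ i))
    (hgrad : ∀ i ∈ A, HasGradientAt (ψ i) (grad i) x) (hle : ∀ i ∈ A, ψ i y ≤ h y)
    (hA : ∀ i ∈ A, h x - ψ i x ≤ ε) (hv : v ∈ convexHull ℝ (grad '' A)) :
    ⟪v, y - x⟫ ≤ h y - h x + ε := by
  obtain ⟨_, ⟨i, hi, rfl⟩, hvi⟩ :=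
    ((innerₛₗ ℝ (y - x)).convexOn convex_univ).exists_ge_of_mem_convexHull (subset_univ _) hv
  have hsub := (hψ i hi).add_inner_le_of_hasGradientAt (mem_univ x) (mem_univ y) (hgrad i hi)
  simp only [innerₛₗ_apply_apply] at hvi
  linarith [real_inner_comm v (y - x), real_inner_comm (grad i) (y - x), hle i hi, hA i hi]

theorem stmt_4_general {n : ℕ} {ι : Type*} [Fintype ι] [Nonempty ι]
    (g : EuclideanSpace ℝ (Fin n) → ℝ) (ψ : ι → EuclideanSpace ℝ (Fin n) → ℝ)
    (hψconv : ∀ i, ConvexOn ℝ Set.univ (ψ i))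
    (h F : EuclideanSpace ℝ (Fin n) → ℝ)
    (hdef : ∀ y, h y = Finset.univ.sup' Finset.univ_nonempty (fun i => ψ i y))
    (hFdef : ∀ y, F y = g y - h y)
    (xk : EuclideanSpace ℝ (Fin n)) (εk : ℝ)
    (gradψ : ι → EuclideanSpace ℝ (Fin n))
    (hψgrad : ∀ i, HasGradientAt (ψ i) (gradψ i) xk)
    (Ak : Finset ι) (hAk : ∀ i, i ∈ Ak ↔ h xk - ψ i xk ≤ εk)
    (vk : EuclideanSpace ℝ (Fin n))
    (hvk : vk ∈ convexHull ℝ (gradψ '' {i | i ∈ Ak}))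
    (σ μ : ℝ) (hσ : 0 ≤ σ)
    (qk : EuclideanSpace ℝ (Fin n) → ℝ)
    (hqk : ∀ y, qk y = g y - ⟪vk, y - xk⟫ + σ / 2 * ‖y - xk‖ ^ 2)
    (hstrong : StrongConvexOn Set.univ μ qk)
    (xk1 : EuclideanSpace ℝ (Fin n)) (hmin : IsMinOn qk Set.univ xk1) :
    F xk1 ≤ F xk + εk - μ / 2 * ‖xk1 - xk‖ ^ 2 := by
  have hdescent : qk xk1 + μ / 2 * ‖xk - xk1‖ ^ 2 ≤ qk xk :=
    hstrong.add_sq_norm_le_of_isMinOn hmin (mem_univ _) (mem_univ _)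
  have hinner : ⟪vk, xk1 - xk⟫ ≤ h xk1 - h xk + εk :=
    inner_sub_le_of_mem_convexHull_nearActive (fun i _ ↦ hψconv i) (fun i _ ↦ hψgrad i)
      (fun i _ ↦ hdef xk1 ▸ Finset.le_sup' (fun j ↦ ψ j xk1) (Finset.mem_univ i))
      (fun i hi ↦ (hAk i).1 hi) hvk
  have hprox : 0 ≤ σ / 2 * ‖xk1 - xk‖ ^ 2 := by positivity
  rw [hqk, hqk, sub_self, inner_zero_right, norm_zero, norm_sub_rev xk] at hdescent
  rw [hFdef, hFdef]
  linarith

/-- Descent lemma for proximal DCA steps with numerical active sets: if `v^k` is a convex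
combination of `ε_k`-active gradients and `x^{k+1}` minimizes the `μ`-strongly convex
subproblem `q_k`, then `F(x^{k+1}) ≤ F(x^k) + ε_k - (μ/2)‖x^{k+1} - x^k‖²`. -/
theorem stmt_4 {n : ℕ} {ι : Type*} [Fintype ι] [Nonempty ι]
    (g : EuclideanSpace ℝ (Fin n) → ℝ) (ψ : ι → EuclideanSpace ℝ (Fin n) → ℝ)
    (hgconv : ConvexOn ℝ Set.univ g) (hgdiff : Differentiable ℝ g)
    (hψconv : ∀ i, ConvexOn ℝ Set.univ (ψ i)) (hψdiff : ∀ i, Differentiable ℝ (ψ i))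
    (h F : EuclideanSpace ℝ (Fin n) → ℝ)
    (hdef : ∀ y, h y = Finset.univ.sup' Finset.univ_nonempty (fun i => ψ i y))
    (hFdef : ∀ y, F y = g y - h y)
    (xk : EuclideanSpace ℝ (Fin n)) (εk : ℝ) (hεk : 0 ≤ εk)
    (gradψ : ι → EuclideanSpace ℝ (Fin n))
    (hψgrad : ∀ i, HasGradientAt (ψ i) (gradψ i) xk)
    (Ak : Finset ι) (hAk : ∀ i, i ∈ Ak ↔ h xk - ψ i xk ≤ εk)
    (vk : EuclideanSpace ℝ (Fin n))
    (hvk : vk ∈ convexHull ℝ (gradψ '' {i | i ∈ Ak}))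
    (σ μ : ℝ) (hσ : 0 ≤ σ) (hμ : 0 < μ)
    (qk : EuclideanSpace ℝ (Fin n) → ℝ)
    (hqk : ∀ y, qk y = g y - ⟪vk, y - xk⟫ + σ / 2 * ‖y - xk‖ ^ 2)
    (hstrong : StrongConvexOn Set.univ μ qk)
    (xk1 : EuclideanSpace ℝ (Fin n)) (hmin : IsMinOn qk Set.univ xk1) :
    F xk1 ≤ F xk + εk - μ / 2 * ‖xk1 - xk‖ ^ 2 :=
  stmt_4_general g ψ hψconv h F hdef hFdef xk εk gradψ hψgrad Ak hAk vk hvk σ μ hσ qk hqk hstrong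
    xk1 hmin
end

section
/- Directional stationarity of RA-DCA accumulation points (deterministic core): Assume g convex C^1 with L_g-Lipschitz gradient, each psi_i convex C^1, F = g - max_i psi_i bounded below with compact enlarged level set; epsilon_k >= 0 summable; the subproblem objective mu-strongly convex uniformly in k; tau_k decreasing to 0; and along every subsequence x^k -> xbar, every index active at xbar eventually belongs to the numerical active set A_k (after passing to a further subsequence). Suppose further that at every iteration either (a) the selected vector v^k is a convex combination of epsilon_k-active gradients and the true vertex residual satisfies max_{i in A_k}||grad psi_i(x^k) - grad g(x^k)|| <= tau_k / (1-eta') for a fixed eta' in (0,1), or (b) v^k = grad psi_{i_k}(x^k) for some i_k in A_k with ||v^k - grad g(x^k)|| >= c > 0 (safeguard triggered with embedding constants). Then, if the descent recursion forces ||x^{k+1} - x^k|| -> 0, every accumulation point xbar of (x^k) satisfies R_d(xbar) = max_{i in A(xbar)} ||grad g(xbar) - grad psi_i(xbar)|| = 0 and is therefore directionally stationary. -/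
/-!
The first-order condition of the subproblem gives `v k = ∇g (x (k+1)) + σ • (x (k+1) - x k)`, so
`‖v k - ∇g (x k)‖ ≤ (Lg + |σ|) ‖x (k+1) - x k‖ → 0`. Hence the safeguarded branch, whose residual is
at least `c`, is eventually never taken, and every `i ∈ A k` satisfies
`‖∇ψ i (x k) - ∇g (x k)‖ ≤ τ k / (1 - η') → 0`. Along a subsequence converging to `x̄` on which
an index `i` active at `x̄` stays in `A k`, this gives `∇ψ i (x k) → ∇g x̄`. Passing to the limit in
the subgradient inequality of the convex function `ψ i` makes `∇g x̄` a subgradient of `ψ i` at `x̄`,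
and a differentiable function has no subgradient other than its gradient.
-/

open scoped RealInnerProductSpace
open Filter Topology Set InnerProductSpace

section Gradient

variable {E : Type*} [NormedAddCommGroup E] [InnerProductSpace ℝ E] [CompleteSpace E]

theorem IsLocalMin.hasGradientAt_eq_zero {f : E → ℝ} {G x : E} (h : IsLocalMin f x)
    (hG : HasGradientAt f G x) : G = 0 :=
  (toDual ℝ E).map_eq_zero_iff.mp (h.hasFDerivAt_eq_zero hG.hasFDerivAt)

theorem HasGradientAt.add {f g : E → ℝ} {f' g' x : E} (hf : HasGradientAt f f' x)
    (hg : HasGradientAt g g' x) : HasGradientAt (fun y => f y + g y) (f' + g') x := by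
  rw [hasGradientAt_iff_hasFDerivAt, map_add]
  exact hf.hasFDerivAt.add hg.hasFDerivAt

theorem HasGradientAt.sub {f g : E → ℝ} {f' g' x : E} (hf : HasGradientAt f f' x)
    (hg : HasGradientAt g g' x) : HasGradientAt (fun y => f y - g y) (f' - g') x := by
  rw [hasGradientAt_iff_hasFDerivAt, map_sub]
  exact hf.hasFDerivAt.sub hg.hasFDerivAt

theorem hasGradientAt_inner_sub_const (w x₀ z : E) :
    HasGradientAt (fun y => ⟪w, y - x₀⟫) w z := by
  rw [hasGradientAt_iff_hasFDerivAt]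
  refine ((innerSL ℝ w).hasFDerivAt.comp z ((hasFDerivAt_id z).sub_const x₀)).congr_fderiv ?_
  ext d
  simp

theorem hasGradientAt_mul_norm_sub_sq (σ : ℝ) (x₀ z : E) :
    HasGradientAt (fun y => σ / 2 * ‖y - x₀‖ ^ 2) (σ • (z - x₀)) z := by
  rw [hasGradientAt_iff_hasFDerivAt]
  refine (((hasFDerivAt_id z).sub_const x₀).norm_sq.const_mul (σ / 2)).congr_fderiv ?_
  ext d
  simp
  ring

theorem HasGradientAt.hasDerivAt_lineMap {f : E → ℝ} {G x : E} (hG : HasGradientAt f G x)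
    (y : E) : HasDerivAt (fun t : ℝ => f (AffineMap.lineMap x y t)) ⟪G, y - x⟫ 0 := by
  have hf : HasFDerivAt f (toDual ℝ E G) (AffineMap.lineMap x y (0 : ℝ)) := by
    simpa using hG.hasFDerivAt
  have := hf.comp_hasDerivAt (0 : ℝ) AffineMap.hasDerivAt_lineMap
  rw [toDual_apply_apply] at this
  exact this

theorem ConvexOn.inner_gradient_le {s : Set E} {f : E → ℝ} (hf : ConvexOn ℝ s f) {G x y : E}
    (hx : x ∈ s) (hy : y ∈ s) (hG : HasGradientAt f G x) : ⟪G, y - x⟫ ≤ f y - f x := by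
  have hline : ConvexOn ℝ (AffineMap.lineMap x y ⁻¹' s) (f ∘ AffineMap.lineMap x y) :=
    hf.comp_affineMap _
  simpa [slope] using hline.le_slope_of_hasDerivAt (x := 0) (y := 1) (by simpa using hx)
    (by simpa using hy) zero_lt_one (hG.hasDerivAt_lineMap y)

theorem HasGradientAt.eq_of_forall_inner_le {f : E → ℝ} {G x w : E} (hG : HasGradientAt f G x)
    (hw : ∀ y, ⟪w, y - x⟫ ≤ f y - f x) : w = G := by
  have hmin : IsLocalMin (fun y => f y - ⟪w, y - x⟫) x :=
    .of_forall fun y => by simp only [sub_self, inner_zero_right]; linarith [hw y]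
  have h0 := hmin.hasGradientAt_eq_zero (hG.sub (hasGradientAt_inner_sub_const w x x))
  exact (sub_eq_zero.mp h0).symm

theorem ConvexOn.gradient_eq_of_tendsto {α : Type*} {l : Filter α} [l.NeBot] {f : E → ℝ}
    {f' : E → E} (hf : ConvexOn ℝ univ f) (hf' : ∀ y, HasGradientAt f (f' y) y) {u : α → E}
    {xbar G : E} (hu : Tendsto u l (𝓝 xbar)) (hG : Tendsto (fun a => f' (u a)) l (𝓝 G)) :
    f' xbar = G := by
  refine ((hf' xbar).eq_of_forall_inner_le fun y => ?_).symm
  refine le_of_tendsto_of_tendsto' (hG.inner (tendsto_const_nhds.sub hu))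
    (tendsto_const_nhds.sub (((hf' xbar).continuousAt).tendsto.comp hu)) fun a => ?_
  exact hf.inner_gradient_le (mem_univ _) (mem_univ y) (hf' (u a))

theorem IsMinOn.eq_gradient_add_smul {g : E → ℝ} {G v x₀ z : E} {σ : ℝ}
    (hmin : IsMinOn (fun y => g y - ⟪v, y - x₀⟫ + σ / 2 * ‖y - x₀‖ ^ 2) univ z)
    (hG : HasGradientAt g G z) : v = G + σ • (z - x₀) := by
  have h0 := (hmin.isLocalMin univ_mem).hasGradientAt_eq_zero
    ((hG.sub (hasGradientAt_inner_sub_const v x₀ z)).add (hasGradientAt_mul_norm_sub_sq σ x₀ z))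
  rw [eq_comm, ← sub_eq_zero, ← h0]
  abel

theorem IsMinOn.norm_sub_gradient_le {g : E → ℝ} {g' : E → E} {v x₀ z : E} {σ L : ℝ}
    (hmin : IsMinOn (fun y => g y - ⟪v, y - x₀⟫ + σ / 2 * ‖y - x₀‖ ^ 2) univ z)
    (hg : HasGradientAt g (g' z) z) (hL : ‖g' z - g' x₀‖ ≤ L * ‖z - x₀‖) :
    ‖v - g' x₀‖ ≤ (L + |σ|) * ‖z - x₀‖ :=
  calc ‖v - g' x₀‖ = ‖(g' z - g' x₀) + σ • (z - x₀)‖ := by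
        rw [hmin.eq_gradient_add_smul hg]; abel_nf
    _ ≤ L * ‖z - x₀‖ + |σ| * ‖z - x₀‖ := by
        grw [norm_add_le, hL, norm_smul, Real.norm_eq_abs]
    _ = (L + |σ|) * ‖z - x₀‖ := by ring

end Gradient

theorem stmt_12_general {n : ℕ} {ι : Type*}
    (g : EuclideanSpace ℝ (Fin n) → ℝ)
    (gradg : EuclideanSpace ℝ (Fin n) → EuclideanSpace ℝ (Fin n))
    (hg : ∀ y, HasGradientAt g (gradg y) y)
    (Lg : ℝ) (hLg : ∀ y z, ‖gradg y - gradg z‖ ≤ Lg * ‖y - z‖)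
    (ψ : ι → EuclideanSpace ℝ (Fin n) → ℝ)
    (gradψ : ι → EuclideanSpace ℝ (Fin n) → EuclideanSpace ℝ (Fin n))
    (hψconv : ∀ i, ConvexOn ℝ Set.univ (ψ i))
    (hψ : ∀ i y, HasGradientAt (ψ i) (gradψ i y) y)
    (h : EuclideanSpace ℝ (Fin n) → ℝ)
    (x : ℕ → EuclideanSpace ℝ (Fin n))
    (A : ℕ → Finset ι)
    (v : ℕ → EuclideanSpace ℝ (Fin n)) (σ : ℝ)
    (q : ℕ → EuclideanSpace ℝ (Fin n) → ℝ)
    (hq : ∀ k y, q k y = g y - ⟪v k, y - x k⟫ + σ / 2 * ‖y - x k‖ ^ 2)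
    (hmin : ∀ k, IsMinOn (q k) Set.univ (x (k + 1)))
    (τ : ℕ → ℝ) (hτ0 : Tendsto τ atTop (nhds 0))
    (hconsist : ∀ (xbar : EuclideanSpace ℝ (Fin n)) (φ : ℕ → ℕ), StrictMono φ →
      Tendsto (x ∘ φ) atTop (nhds xbar) → ∀ i, ψ i xbar = h xbar →
      ∃ φ' : ℕ → ℕ, StrictMono φ' ∧ ∀ᶠ k in atTop, i ∈ A (φ (φ' k)))
    (η' : ℝ) (c : ℝ) (hc : 0 < c)
    (hbranch : ∀ k,
      (v k ∈ convexHull ℝ ((fun i => gradψ i (x k)) '' {i | i ∈ A k}) ∧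
        ∀ i ∈ A k, ‖gradψ i (x k) - gradg (x k)‖ ≤ τ k / (1 - η')) ∨
      (∃ ik ∈ A k, v k = gradψ ik (x k) ∧ c ≤ ‖v k - gradg (x k)‖))
    (hstep : Tendsto (fun k => ‖x (k + 1) - x k‖) atTop (nhds 0)) :
    ∀ xbar : EuclideanSpace ℝ (Fin n), MapClusterPt xbar atTop x →
      (∀ i, ψ i xbar = h xbar → gradψ i xbar = gradg xbar) ∧
      (∀ d : EuclideanSpace ℝ (Fin n), ∀ i, ψ i xbar = h xbar →
        ⟪gradψ i xbar, d⟫ ≤ ⟪gradg xbar, d⟫) := by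
  intro xbar hclust
  have hgcont : Continuous gradg :=
    (LipschitzWith.of_dist_le' (K := Lg) fun y z => by
      simpa [dist_eq_norm] using hLg y z).continuous
  have hres : Tendsto (fun k => ‖v k - gradg (x k)‖) atTop (𝓝 0) := by
    refine squeeze_zero (fun k => norm_nonneg _) (fun k => ?_)
      (by simpa using hstep.const_mul (Lg + |σ|))
    exact (funext (hq k) ▸ hmin k).norm_sub_gradient_le (hg _) (hLg _ _)
  have hsmall : ∀ᶠ k in atTop, ∀ i ∈ A k, ‖gradψ i (x k) - gradg (x k)‖ ≤ τ k / (1 - η') := by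
    filter_upwards [hres.eventually_lt_const hc] with k hk
    refine ((hbranch k).resolve_right ?_).2
    rintro ⟨_, _, _, hck⟩
    exact hk.not_ge hck
  have hgrad : ∀ i, ψ i xbar = h xbar → gradψ i xbar = gradg xbar := by
    intro i hi
    obtain ⟨φ, hφ, hxφ⟩ := hclust.tendsto_subseq
    obtain ⟨φ', hφ', hiA⟩ := hconsist xbar φ hφ hxφ i hi
    have hm := (hφ.comp hφ').tendsto_atTop
    have hxm : Tendsto (fun k => x (φ (φ' k))) atTop (𝓝 xbar) := hxφ.comp hφ'.tendsto_atTop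
    have hdiff : Tendsto (fun k => gradψ i (x (φ (φ' k))) - gradg (x (φ (φ' k)))) atTop (𝓝 0) := by
      refine squeeze_zero_norm' ?_ (by simpa using (hτ0.comp hm).div_const (1 - η'))
      filter_upwards [hm.eventually hsmall, hiA] with k hk hik
      exact hk i hik
    exact (hψconv i).gradient_eq_of_tendsto (hψ i) hxm
      (by simpa using hdiff.add ((hgcont.tendsto xbar).comp hxm))
  exact ⟨hgrad, fun d i hi => by rw [hgrad i hi]⟩

/-- Directional stationarity of RA-DCA accumulation points (deterministic core).  Under the
regularity, summable numerical active-set tolerance, uniform strong convexity, vanishing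
safeguard tolerances, numerical active-set consistency, and the two-branch selection rule
(convex-combination branch with small true vertex residual, or safeguarded vertex branch with
vertex mismatch bounded below by `c > 0`), if the steps `‖x^{k+1} - x^k‖ → 0` then every
accumulation point `x̄` has vanishing vertex residual `R_d(x̄) = 0` (all active gradients equal
`∇g(x̄)`), hence is directionally stationary. -/
theorem stmt_12 {n : ℕ} {ι : Type*} [Fintype ι] [Nonempty ι]
    (g : EuclideanSpace ℝ (Fin n) → ℝ)
    (gradg : EuclideanSpace ℝ (Fin n) → EuclideanSpace ℝ (Fin n))
    (hgconv : ConvexOn ℝ Set.univ g) (hg : ∀ y, HasGradientAt g (gradg y) y)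
    (Lg : ℝ) (hLg : ∀ y z, ‖gradg y - gradg z‖ ≤ Lg * ‖y - z‖)
    (ψ : ι → EuclideanSpace ℝ (Fin n) → ℝ)
    (gradψ : ι → EuclideanSpace ℝ (Fin n) → EuclideanSpace ℝ (Fin n))
    (hψconv : ∀ i, ConvexOn ℝ Set.univ (ψ i))
    (hψ : ∀ i y, HasGradientAt (ψ i) (gradψ i y) y)
    (h F : EuclideanSpace ℝ (Fin n) → ℝ)
    (hdef : ∀ y, h y = Finset.univ.sup' Finset.univ_nonempty (fun i => ψ i y))
    (hFdef : ∀ y, F y = g y - h y)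
    (Finf : ℝ) (hFbd : ∀ y, Finf ≤ F y)
    (ε : ℕ → ℝ) (hε : ∀ k, 0 ≤ ε k) (Eε : ℝ) (hEε : HasSum ε Eε)
    (x : ℕ → EuclideanSpace ℝ (Fin n))
    (hlevel : IsCompact {y | F y ≤ F (x 0) + Eε})
    (A : ℕ → Finset ι) (hAdef : ∀ k i, i ∈ A k ↔ h (x k) - ψ i (x k) ≤ ε k)
    (v : ℕ → EuclideanSpace ℝ (Fin n)) (σ : ℝ) (hσ : 0 ≤ σ)
    (q : ℕ → EuclideanSpace ℝ (Fin n) → ℝ)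
    (hq : ∀ k y, q k y = g y - ⟪v k, y - x k⟫ + σ / 2 * ‖y - x k‖ ^ 2)
    (μ : ℝ) (hμ : 0 < μ) (hstrong : ∀ k, StrongConvexOn Set.univ μ (q k))
    (hmin : ∀ k, IsMinOn (q k) Set.univ (x (k + 1)))
    (τ : ℕ → ℝ) (hτanti : Antitone τ) (hτ0 : Tendsto τ atTop (nhds 0))
    (hconsist : ∀ (xbar : EuclideanSpace ℝ (Fin n)) (φ : ℕ → ℕ), StrictMono φ →
      Tendsto (x ∘ φ) atTop (nhds xbar) → ∀ i, ψ i xbar = h xbar →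
      ∃ φ' : ℕ → ℕ, StrictMono φ' ∧ ∀ᶠ k in atTop, i ∈ A (φ (φ' k)))
    (η' : ℝ) (hη' : η' ∈ Set.Ioo (0 : ℝ) 1) (c : ℝ) (hc : 0 < c)
    (hbranch : ∀ k,
      (v k ∈ convexHull ℝ ((fun i => gradψ i (x k)) '' {i | i ∈ A k}) ∧
        ∀ i ∈ A k, ‖gradψ i (x k) - gradg (x k)‖ ≤ τ k / (1 - η')) ∨
      (∃ ik ∈ A k, v k = gradψ ik (x k) ∧ c ≤ ‖v k - gradg (x k)‖))
    (hstep : Tendsto (fun k => ‖x (k + 1) - x k‖) atTop (nhds 0)) :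
    ∀ xbar : EuclideanSpace ℝ (Fin n), MapClusterPt xbar atTop x →
      (∀ i, ψ i xbar = h xbar → gradψ i xbar = gradg xbar) ∧
      (∀ d : EuclideanSpace ℝ (Fin n), ∀ i, ψ i xbar = h xbar →
        ⟪gradψ i xbar, d⟫ ≤ ⟪gradg xbar, d⟫) :=
  stmt_12_general g gradg hg Lg hLg ψ gradψ hψconv hψ h x A v σ q hq hmin τ hτ0 hconsist η' c hc
    hbranch hstep
end

section
/- Block directional-stationarity characterization: let F_b(x) = g(x) - sum_{l=1}^p h_l(x) with h_l(x) = max_{i in I_l} psi_{l i}(x), each psi_{l i} convex differentiable, g differentiable. Let A_l(x) be the active set of block l, and let V(x) = { sum_{l=1}^p grad psi_{l, i_l}(x) : i_l in A_l(x) for each l } be the set of aggregate active vertices. Then x is directionally stationary for F_b (i.e., F_b'(x; d) >= 0 for all d) if and only if R_b(x) := max_{v in V(x)} ||grad g(x) - v|| = 0, i.e., every aggregate active vertex equals grad g(x). -/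
open scoped RealInnerProductSpace

/-- Block directional-stationarity characterization for
`F_b = g - ∑_l max_{i ∈ I_l} ψ_{l i}`: `x` is directionally stationary (the directional
derivative `⟪∇g(x), d⟫ - ∑_l max_{i ∈ A_l(x)} ⟪∇ψ_{l i}(x), d⟫` is nonnegative for all `d`)
iff every aggregate active vertex `∑_l ∇ψ_{l, i_l}(x)` equals `∇g(x)`
(i.e. the block residual `R_b(x)` vanishes). -/
theorem stmt_13 {n p : ℕ} {ι : Fin p → Type*} [∀ l, Fintype (ι l)] [∀ l, Nonempty (ι l)]
    (g : EuclideanSpace ℝ (Fin n) → ℝ) (ψ : ∀ l, ι l → EuclideanSpace ℝ (Fin n) → ℝ)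
    (x gradg : EuclideanSpace ℝ (Fin n)) (gradψ : ∀ l, ι l → EuclideanSpace ℝ (Fin n))
    (hg : HasGradientAt g gradg x)
    (hψconv : ∀ l i, ConvexOn ℝ Set.univ (ψ l i))
    (hψ : ∀ l i, HasGradientAt (ψ l i) (gradψ l i) x)
    (hblock : ∀ l, EuclideanSpace ℝ (Fin n) → ℝ)
    (hblockdef : ∀ l y, hblock l y = Finset.univ.sup' Finset.univ_nonempty (fun i => ψ l i y))
    (A : ∀ l, Finset (ι l)) (hA : ∀ l i, i ∈ A l ↔ ψ l i x = hblock l x)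
    (hAne : ∀ l, (A l).Nonempty) :
    (∀ d : EuclideanSpace ℝ (Fin n),
        0 ≤ ⟪gradg, d⟫ - ∑ l, (A l).sup' (hAne l) (fun i => ⟪gradψ l i, d⟫))
      ↔ (∀ sel : ∀ l, ι l, (∀ l, sel l ∈ A l) → ∑ l, gradψ l (sel l) = gradg) := by
  constructor
  · intro h sel hsel
    set v := ∑ l, gradψ l (sel l) with hv
    have key : ∀ d : EuclideanSpace ℝ (Fin n), ⟪v, d⟫ ≤ ⟪gradg, d⟫ := by
      intro d
      have h1 := h d
      have h2 : ⟪v, d⟫ ≤ ∑ l, (A l).sup' (hAne l) (fun i => ⟪gradψ l i, d⟫) := by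
        rw [hv, sum_inner]
        exact Finset.sum_le_sum fun l _ =>
          Finset.le_sup' (fun i => ⟪gradψ l i, d⟫) (hsel l)
      linarith
    have h3 := key (v - gradg)
    have h4 : ⟪v - gradg, v - gradg⟫ ≤ 0 := by
      have := inner_sub_left (𝕜 := ℝ) v gradg (v - gradg)
      linarith
    have h5 : v - gradg = 0 := by
      have := real_inner_self_nonpos.mp h4
      exact this
    exact sub_eq_zero.mp h5
  · intro h d
    have hsel : ∀ l, ∃ i ∈ A l,
        (A l).sup' (hAne l) (fun i => ⟪gradψ l i, d⟫) = ⟪gradψ l i, d⟫ := fun l =>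
      Finset.exists_mem_eq_sup' (hAne l) _
    choose sel hmem hval using hsel
    have : ∑ l, (A l).sup' (hAne l) (fun i => ⟪gradψ l i, d⟫)
        = ⟪gradg, d⟫ := by
      rw [← h sel hmem, sum_inner]
      exact Finset.sum_congr rfl fun l _ => hval l
    linarith
end

section
/- Per-iteration residual dichotomy (Proposition on worst-iterate residual): under the two-sided embedding (1-eta)||z|| <= ||Dz|| <= (1+eta)||z|| on the span of the active difference vectors, if the algorithm either accepts a convex-combination step because the sampled residual Rhat <= tau, or takes the maximizing vertex v = grad psi_{i*}(x) with Rhat > tau and the next iterate x^+ satisfies grad g(x^+) - v + sigma(x^+ - x) = 0 with grad g being L_g-Lipschitz, then in either case R_d(x) <= max{ tau/(1-eta), ((1+eta)(L_g+sigma)/(1-eta)) ||x^+ - x|| }. -/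
open scoped RealInnerProductSpace

/-- Per-iteration residual dichotomy: under the two-sided embedding on the span of the
active difference vectors, if either (no safeguard) the sampled residual satisfies
`R̂ ≤ τ`, or (safeguard) the maximizing vertex `v = ∇ψ_{i*}(x)` is taken with `R̂ > τ` and
the next iterate satisfies `∇g(x⁺) - v + σ(x⁺ - x) = 0` with `∇g` being `L_g`-Lipschitz,
then `R_d(x) ≤ max{ τ/(1-η), ((1+η)(L_g+σ)/(1-η))‖x⁺ - x‖ }`. -/
theorem stmt_19 {n m : ℕ} {ι : Type*} [Fintype ι]
    (g : EuclideanSpace ℝ (Fin n) → ℝ)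
    (gradg : EuclideanSpace ℝ (Fin n) → EuclideanSpace ℝ (Fin n))
    (hg : ∀ y, HasGradientAt g (gradg y) y)
    (Lg : ℝ) (hLg : ∀ y z, ‖gradg y - gradg z‖ ≤ Lg * ‖y - z‖)
    (D : EuclideanSpace ℝ (Fin n) →ₗ[ℝ] EuclideanSpace ℝ (Fin m))
    (η : ℝ) (hη : η ∈ Set.Ioo (0 : ℝ) 1) (τ : ℝ) (hτ : 0 ≤ τ)
    (σ : ℝ) (hσ : 0 ≤ σ)
    (x xplus : EuclideanSpace ℝ (Fin n))
    (gψ : ι → EuclideanSpace ℝ (Fin n))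
    (S : Submodule ℝ (EuclideanSpace ℝ (Fin n)))
    (hembed : ∀ z ∈ S, (1 - η) * ‖z‖ ≤ ‖D z‖ ∧ ‖D z‖ ≤ (1 + η) * ‖z‖)
    (A Aex : Finset ι) (hsub : Aex ⊆ A) (hAne : A.Nonempty) (hAexne : Aex.Nonempty)
    (hS : ∀ i ∈ A, gψ i - gradg x ∈ S)
    (Rhat : ℝ) (hRhat : Rhat = A.sup' hAne (fun i => ‖D (gψ i - gradg x)‖))
    (hbranch : Rhat ≤ τ ∨
      (∃ istar ∈ A, ‖D (gψ istar - gradg x)‖ = Rhat ∧ τ < Rhat ∧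
        gradg xplus - gψ istar + σ • (xplus - x) = 0)) :
    Aex.sup' hAexne (fun i => ‖gradg x - gψ i‖) ≤
      max (τ / (1 - η)) ((1 + η) * (Lg + σ) / (1 - η) * ‖xplus - x‖) := by
  obtain ⟨hη0, hη1⟩ := hη
  have h1η : 0 < 1 - η := by linarith
  rw [Finset.sup'_le_iff]
  intro i hi
  have hiA : i ∈ A := hsub hi
  have hlow := (hembed _ (hS i hiA)).1
  have hle : ‖D (gψ i - gradg x)‖ ≤ Rhat := by
    rw [hRhat]; exact Finset.le_sup' (fun i => ‖D (gψ i - gradg x)‖) hiA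
  have key : (1 - η) * ‖gradg x - gψ i‖ ≤ Rhat := by
    rw [norm_sub_rev]; exact hlow.trans hle
  rcases hbranch with h | ⟨istar, hiA', heq, hτlt, hopt⟩
  · refine le_trans ?_ (le_max_left _ _)
    rw [le_div_iff₀ h1η]
    nlinarith
  · refine le_trans ?_ (le_max_right _ _)
    have hup := (hembed _ (hS istar hiA')).2
    have hv : gψ istar = gradg xplus + σ • (xplus - x) := by
      have h := hopt
      have : gψ istar - (gradg xplus + σ • (xplus - x)) = -(gradg xplus - gψ istar + σ • (xplus - x)) := by abel
      have h2 : gψ istar - (gradg xplus + σ • (xplus - x)) = 0 := by rw [this, hopt, neg_zero]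
      exact sub_eq_zero.mp h2
    have hnorm : ‖gψ istar - gradg x‖ ≤ (Lg + σ) * ‖xplus - x‖ := by
      have hrw : gψ istar - gradg x = (gradg xplus - gradg x) + σ • (xplus - x) := by
        rw [hv]; abel
      rw [hrw]
      calc ‖(gradg xplus - gradg x) + σ • (xplus - x)‖
          ≤ ‖gradg xplus - gradg x‖ + ‖σ • (xplus - x)‖ := norm_add_le _ _
        _ ≤ Lg * ‖xplus - x‖ + σ * ‖xplus - x‖ := by
            rw [norm_smul, Real.norm_of_nonneg hσ]
            exact add_le_add (hLg _ _) le_rfl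
        _ = (Lg + σ) * ‖xplus - x‖ := by ring
    have hR : Rhat ≤ (1 + η) * ((Lg + σ) * ‖xplus - x‖) := by
      rw [← heq]
      refine hup.trans ?_
      nlinarith [norm_nonneg (gψ istar - gradg x)]
    rw [div_mul_eq_mul_div, le_div_iff₀ h1η]
    nlinarith
end
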